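/- arXiv:2409.18894 — 2 statements merged into one kernel-verified Lean document; each statement's English description precedes it below -/
import Mathlib

section
/- Let g, κ be a compatible pair of non-decreasing, right-continuous, unbounded functions on [0,∞) with g(0)=κ(0)=0 and strictly positive on (0,∞). If u is a jump point of g, then (g ∘̃ κ)(κ⁻¹(u−)) = g(u−) ≥ (g ∘̃ κ)(s) for all s < κ⁻¹(u−), and (g ∘̃ κ)(κ⁻¹(u)) = g(u) ≤ (g ∘̃ κ)(s) for all s > κ⁻¹(u). -/
open Set Function Filter

/-- Right-continuous generalized inverse: `h⁻¹(s) = inf {u > 0 : h(u) > s}`. -/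
noncomputable def ginv (h : ℝ → ℝ) (s : ℝ) : ℝ := sInf {u : ℝ | 0 < u ∧ s < h u}

/-- Left limit of a function monotone on `[0,∞)`, with the convention `h(0−) = h(0)`. -/
noncomputable def llim (h : ℝ → ℝ) (u : ℝ) : ℝ :=
  if u ≤ 0 then h 0 else sSup (h '' Set.Ico 0 u)

/-- Right-continuity on `[0,∞)`. -/
def RightCts (h : ℝ → ℝ) : Prop := ∀ x : ℝ, 0 ≤ x → ContinuousWithinAt h (Set.Ici x) x

/-- The class `D₀↑↑(ℝ₊)`: non-decreasing, right-continuous, `h 0 = 0`, strictly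
positive on `(0,∞)`, and unbounded. -/
def Dpp (h : ℝ → ℝ) : Prop :=
  MonotoneOn h (Set.Ici 0) ∧ RightCts h ∧ h 0 = 0 ∧ (∀ t : ℝ, 0 < t → 0 < h t) ∧
    (∀ M : ℝ, ∃ t : ℝ, 0 ≤ t ∧ M < h t)

/-- `h` jumps at `u`: `h(u−) < h(u)`. -/
noncomputable def JumpAt (h : ℝ → ℝ) (u : ℝ) : Prop := llim h u < h u

/-- Compatibility condition (H1): whenever `g` jumps at `u`, the level set
`{r ≥ 0 : κ r = u}` has positive length. -/
def H1 (g κ : ℝ → ℝ) : Prop :=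
  ∀ u : ℝ, JumpAt g u → ∃ r₁ r₂ : ℝ, 0 ≤ r₁ ∧ r₁ < r₂ ∧ κ r₁ = u ∧ κ r₂ = u

/-- Compatibility condition (H2): whenever `κ(s−) < κ(s)`, `g(κ(s−)) = g(κ(s)−)`. -/
def H2 (g κ : ℝ → ℝ) : Prop :=
  ∀ s : ℝ, 0 ≤ s → llim κ s < κ s → g (llim κ s) = llim g (κ s)

-- Smooth composition `g ∘̃ κ`: equal to `g ∘ κ` outside the intervals
-- `[κ⁻¹(u−), κ⁻¹(u)]` over jump points `u` of `g`, and on each such interval the linear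
-- interpolation between `(κ⁻¹(u−), g(u−))` and `(κ⁻¹(u), g(u))`.
open scoped Classical in
noncomputable def stilde (g κ : ℝ → ℝ) (s : ℝ) : ℝ :=
  if h : ∃ u : ℝ, JumpAt g u ∧ s ∈ Set.Icc (llim (ginv κ) u) (ginv κ u) then
    let u := Classical.choose h
    llim g u + (g u - llim g u) * (s - llim (ginv κ) u) / (ginv κ u - llim (ginv κ) u)
  else g (κ s)

section Helpers

variable {g κ : ℝ → ℝ}

lemma ginv_nonneg (κ : ℝ → ℝ) (s : ℝ) : 0 ≤ ginv κ s :=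
  Real.sInf_nonneg (fun x hx => le_of_lt hx.1)

lemma ginv_set_nonempty (hκ : Dpp κ) (s : ℝ) : {u : ℝ | 0 < u ∧ s < κ u}.Nonempty := by
  obtain ⟨t, ht0, ht⟩ := hκ.2.2.2.2 (max s 0)
  refine ⟨t, ?_, lt_of_le_of_lt (le_max_left _ _) ht⟩
  rcases eq_or_lt_of_le ht0 with h | h
  · exfalso; rw [← h, hκ.2.2.1] at ht; exact absurd (le_max_right s 0) (not_le.mpr ht)
  · exact h

lemma ginv_mono (hκ : Dpp κ) {s t : ℝ} (h : s ≤ t) : ginv κ s ≤ ginv κ t := by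
  apply csInf_le_csInf ⟨0, fun x hx => le_of_lt hx.1⟩ (ginv_set_nonempty hκ t)
  exact fun x hx => ⟨hx.1, lt_of_le_of_lt h hx.2⟩

/-- If `0 ≤ t < ginv κ s` then `κ t ≤ s`. -/
lemma ginv_lt_imp (hκ : Dpp κ) {s t : ℝ} (hs : 0 ≤ s) (ht : 0 ≤ t)
    (h : t < ginv κ s) : κ t ≤ s := by
  by_contra hc
  push_neg at hc
  rcases eq_or_lt_of_le ht with h0 | h0
  · rw [← h0, hκ.2.2.1] at hc; exact absurd hs (not_le.mpr hc)
  · have : t ∈ {u : ℝ | 0 < u ∧ s < κ u} := ⟨h0, hc⟩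
    exact absurd (csInf_le ⟨0, fun x hx => le_of_lt hx.1⟩ this) (not_le.mpr h)

/-- If `ginv κ s < t` (with `t ≥ 0`) then `s < κ t`. -/
lemma lt_apply_of_ginv_lt (hκ : Dpp κ) {s t : ℝ} (h : ginv κ s < t) : s < κ t := by
  obtain ⟨x, hx, hxt⟩ := exists_lt_of_csInf_lt (ginv_set_nonempty hκ s) h
  exact lt_of_lt_of_le hx.2 (hκ.1 (le_of_lt hx.1) (le_trans (le_of_lt hx.1) (le_of_lt hxt)) (le_of_lt hxt))

/-- `s ≤ κ (ginv κ s)` for `s ≥ 0`, by right continuity. -/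
lemma le_apply_ginv (hκ : Dpp κ) {s : ℝ} (hs : 0 ≤ s) : s ≤ κ (ginv κ s) := by
  set x := ginv κ s with hx
  have hx0 : 0 ≤ x := ginv_nonneg κ s
  have ht : Filter.Tendsto κ (nhdsWithin x (Set.Ioi x)) (nhds (κ x)) :=
    (hκ.2.1 x hx0).mono_left (nhdsWithin_mono x Set.Ioi_subset_Ici_self)
  refine ge_of_tendsto ht ?_
  filter_upwards [self_mem_nhdsWithin] with t htmem
  exact le_of_lt (lt_apply_of_ginv_lt hκ htmem)

lemma llim_of_nonpos {h : ℝ → ℝ} {x : ℝ} (hx : x ≤ 0) : llim h x = h 0 := if_pos hx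

lemma llim_of_pos {h : ℝ → ℝ} {x : ℝ} (hx : 0 < x) : llim h x = sSup (h '' Set.Ico 0 x) :=
  if_neg (not_le.mpr hx)

lemma bddAbove_llim {h : ℝ → ℝ} (hm : MonotoneOn h (Set.Ici 0)) {x : ℝ} (hx : 0 ≤ x) :
    BddAbove (h '' Set.Ico 0 x) := by
  refine ⟨h x, fun y hy => ?_⟩
  obtain ⟨w, hw, rfl⟩ := hy
  exact hm hw.1 hx (le_of_lt hw.2)

lemma le_llim {h : ℝ → ℝ} (hm : MonotoneOn h (Set.Ici 0)) {w x : ℝ}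
    (hw : 0 ≤ w) (hwx : w < x) : h w ≤ llim h x := by
  rw [llim_of_pos (lt_of_le_of_lt hw hwx)]
  exact le_csSup (bddAbove_llim hm (le_of_lt (lt_of_le_of_lt hw hwx))) ⟨w, ⟨hw, hwx⟩, rfl⟩

lemma llim_le {h : ℝ → ℝ} {x c : ℝ} (hx : 0 < x)
    (hc : ∀ w, 0 ≤ w → w < x → h w ≤ c) : llim h x ≤ c := by
  rw [llim_of_pos hx]
  exact csSup_le ⟨h 0, ⟨0, ⟨le_refl 0, hx⟩, rfl⟩⟩ (fun y ⟨w, hw, hwy⟩ => hwy ▸ hc w hw.1 hw.2)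

lemma llim_le_self {h : ℝ → ℝ} (hm : MonotoneOn h (Set.Ici 0)) {x : ℝ} (hx : 0 ≤ x) :
    llim h x ≤ h x := by
  rcases eq_or_lt_of_le hx with h0 | h0
  · rw [← h0, llim_of_nonpos (le_refl 0)]
  · exact llim_le h0 (fun w hw hwx => hm hw hx (le_of_lt hwx))

lemma llim_mono {h : ℝ → ℝ} (hm : MonotoneOn h (Set.Ici 0)) {x y : ℝ}
    (hx : 0 < x) (hxy : x ≤ y) : llim h x ≤ llim h y :=
  llim_le hx (fun w hw hwx => le_llim hm hw (lt_of_lt_of_le hwx hxy))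

/-- `ginv κ` is monotone on all of `ℝ`, hence on `Ici 0`. -/
lemma ginv_monoOn (hκ : Dpp κ) : MonotoneOn (ginv κ) (Set.Ici 0) :=
  fun _ _ _ _ h => ginv_mono hκ h

/-- A jump point of `g` is positive (using H1 and positivity of `κ`). -/
lemma jump_pos (hκ : Dpp κ) (h1 : H1 g κ) {u : ℝ} (hu : JumpAt g u) : 0 < u := by
  obtain ⟨r₁, r₂, hr₁, hr₁₂, _, hκr₂⟩ := h1 u hu
  exact hκr₂ ▸ hκ.2.2.2.1 r₂ (lt_of_le_of_lt hr₁ hr₁₂)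

/-- At a jump of `g`, the interval `[ginv κ (u−), ginv κ u]` is nondegenerate. -/
lemma jump_interval (hκ : Dpp κ) (h1 : H1 g κ) {u : ℝ} (hu : JumpAt g u) :
    llim (ginv κ) u < ginv κ u := by
  obtain ⟨r₁, r₂, hr₁, hr₁₂, hκr₁, hκr₂⟩ := h1 u hu
  have hu0 : 0 < u := jump_pos hκ h1 hu
  have hr₁0 : 0 < r₁ := by
    rcases eq_or_lt_of_le hr₁ with h0 | h0
    · exfalso; rw [← h0, hκ.2.2.1] at hκr₁; exact absurd hκr₁.symm (ne_of_gt hu0)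
    · exact h0
  have hA : llim (ginv κ) u ≤ r₁ := by
    apply llim_le hu0
    intro w _ hwu
    exact csInf_le ⟨0, fun x hx => le_of_lt hx.1⟩ ⟨hr₁0, by rw [hκr₁]; exact hwu⟩
  have hB : r₂ ≤ ginv κ u := by
    apply le_csInf (ginv_set_nonempty hκ u)
    intro t ht
    by_contra hc
    push_neg at hc
    have : κ t ≤ u := hκr₂ ▸ hκ.1 (le_of_lt ht.1) (le_trans hr₁ (le_of_lt hr₁₂)) (le_of_lt hc)
    exact absurd ht.2 (not_lt.mpr this)
  exact lt_of_le_of_lt hA (lt_of_lt_of_le hr₁₂ hB)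

/-- Core bridge lemma via H2: if `ginv κ` is constant on `[a,b)` in the sense
`ginv κ a = llim (ginv κ) b`, then `g a = llim g b`. -/
lemma bridge (hg : Dpp g) (hκ : Dpp κ) (h2 : H2 g κ) {a b : ℝ}
    (ha : 0 < a) (hab : a < b) (heq : ginv κ a = llim (ginv κ) b) : g a = llim g b := by
  set r := ginv κ a with hrdef
  have hr0 : 0 ≤ r := ginv_nonneg κ a
  have hconst : ∀ w, a ≤ w → w < b → ginv κ w = r := by
    intro w hw hwb
    refine le_antisymm ?_ (ginv_mono hκ hw)
    have h := le_llim (ginv_monoOn hκ) (le_trans (le_of_lt ha) hw) hwb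
    rw [← heq] at h
    exact h
  have hκrb : b ≤ κ r := by
    by_contra hc
    push_neg at hc
    set w := max a ((κ r + b) / 2) with hwdef
    have hw1 : a ≤ w := le_max_left _ _
    have hw2 : w < b := max_lt hab (by linarith)
    have := le_apply_ginv hκ (s := w) (le_trans (le_of_lt ha) hw1)
    rw [hconst w hw1 hw2] at this
    have : (κ r + b) / 2 ≤ κ r := le_trans (le_max_right _ _) this
    linarith
  have hllim : llim κ r ≤ a := by
    rcases eq_or_lt_of_le hr0 with h0 | h0
    · rw [← h0, llim_of_nonpos (le_refl 0), hκ.2.2.1]; exact le_of_lt ha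
    · exact llim_le h0 (fun t ht htr => ginv_lt_imp hκ (le_of_lt ha) ht htr)
  have hjump : llim κ r < κ r := lt_of_le_of_lt hllim (lt_of_lt_of_le hab hκrb)
  have hh2 := h2 r hr0 hjump
  have hllim0 : 0 ≤ llim κ r := by
    rcases eq_or_lt_of_le hr0 with h0 | h0
    · rw [← h0, llim_of_nonpos (le_refl 0), hκ.2.2.1]
    · have := le_llim hκ.1 (le_refl 0) h0
      rw [hκ.2.2.1] at this
      exact this
  have c1 : g a ≤ llim g b := le_llim hg.1 (le_of_lt ha) hab
  have c2 : llim g b ≤ llim g (κ r) := llim_mono hg.1 (lt_trans ha hab) hκrb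
  have c3 : g (llim κ r) ≤ g a := hg.1 hllim0 (le_of_lt ha) hllim
  linarith

lemma apply_nonneg (hκ : Dpp κ) {s : ℝ} (hs : 0 ≤ s) : 0 ≤ κ s := by
  have h := hκ.1 (Set.mem_Ici.mpr (le_refl 0)) (Set.mem_Ici.mpr hs) hs
  rwa [hκ.2.2.1] at h

lemma interp_left {lo hi A B : ℝ} : lo + (hi - lo) * (A - A) / (B - A) = lo := by
  simp

lemma interp_right {lo hi A B : ℝ} (h : A < B) :
    lo + (hi - lo) * (B - A) / (B - A) = hi := by
  rw [mul_div_assoc, div_self (ne_of_gt (by linarith : (0:ℝ) < B - A)), mul_one]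
  ring

lemma interp_mem {lo hi A B s : ℝ} (hlh : lo ≤ hi) (hAB : A < B) (hs : s ∈ Set.Icc A B) :
    lo ≤ lo + (hi - lo) * (s - A) / (B - A) ∧ lo + (hi - lo) * (s - A) / (B - A) ≤ hi := by
  have hD : 0 < B - A := by linarith
  constructor
  · have : 0 ≤ (hi - lo) * (s - A) / (B - A) :=
      div_nonneg (mul_nonneg (by linarith) (by linarith [hs.1])) (le_of_lt hD)
    linarith
  · have : (hi - lo) * (s - A) / (B - A) ≤ hi - lo := by
      rw [div_le_iff₀ hD]
      nlinarith [hs.2]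
    linarith

lemma stilde_spec {s : ℝ}
    (hex : ∃ v : ℝ, JumpAt g v ∧ s ∈ Set.Icc (llim (ginv κ) v) (ginv κ v)) :
    ∃ v : ℝ, (JumpAt g v ∧ s ∈ Set.Icc (llim (ginv κ) v) (ginv κ v)) ∧
      stilde g κ s =
        llim g v + (g v - llim g v) * (s - llim (ginv κ) v) / (ginv κ v - llim (ginv κ) v) := by
  refine ⟨Classical.choose hex, Classical.choose_spec hex, ?_⟩
  unfold stilde
  rw [dif_pos hex]

lemma stilde_neg {s : ℝ}
    (hex : ¬ ∃ v : ℝ, JumpAt g v ∧ s ∈ Set.Icc (llim (ginv κ) v) (ginv κ v)) :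
    stilde g κ s = g (κ s) := by
  unfold stilde
  rw [dif_neg hex]

end Helpers

/-- At a jump point `u` of `g`, `(g ∘̃ κ)(κ⁻¹(u−)) = g(u−)` dominates all earlier
values and `(g ∘̃ κ)(κ⁻¹(u)) = g(u)` is dominated by all later values. -/
theorem stmt6 (g κ : ℝ → ℝ) (hg : Dpp g) (hκ : Dpp κ)
    (h1 : H1 g κ) (h2 : H2 g κ) (u : ℝ) (hu : JumpAt g u) :
    stilde g κ (llim (ginv κ) u) = llim g u ∧
    (∀ s : ℝ, 0 ≤ s → s < llim (ginv κ) u → stilde g κ s ≤ llim g u) ∧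
    stilde g κ (ginv κ u) = g u ∧
    (∀ s : ℝ, ginv κ u < s → g u ≤ stilde g κ s) := by
  have hu0 : 0 < u := jump_pos hκ h1 hu
  have hI : llim (ginv κ) u < ginv κ u := jump_interval hκ h1 hu
  have hmono := ginv_monoOn hκ
  refine ⟨?_, ?_, ?_, ?_⟩
  · have hex : ∃ v : ℝ, JumpAt g v ∧
        llim (ginv κ) u ∈ Set.Icc (llim (ginv κ) v) (ginv κ v) :=
      ⟨u, hu, le_refl _, le_of_lt hI⟩
    obtain ⟨v, ⟨hv, hmem⟩, heq⟩ := stilde_spec hex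
    have hv0 : 0 < v := jump_pos hκ h1 hv
    have hIv : llim (ginv κ) v < ginv κ v := jump_interval hκ h1 hv
    rcases lt_trichotomy v u with hlt | rfl | hgt
    · have hE : ginv κ v = llim (ginv κ) u :=
        le_antisymm (le_llim hmono hv0.le hlt) hmem.2
      have hb := bridge hg hκ h2 hv0 hlt hE
      rw [heq, ← hE, interp_right hIv]
      exact hb
    · rw [heq]
      exact interp_left
    · exfalso
      have h3 : ginv κ u ≤ llim (ginv κ) v := le_llim hmono hu0.le hgt
      have h4 := hmem.1
      linarith
  · intro s hs0 hs
    by_cases hex : ∃ v : ℝ, JumpAt g v ∧ s ∈ Set.Icc (llim (ginv κ) v) (ginv κ v)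
    · obtain ⟨v, ⟨hv, hmem⟩, heq⟩ := stilde_spec hex
      have hv0 : 0 < v := jump_pos hκ h1 hv
      have hIv : llim (ginv κ) v < ginv κ v := jump_interval hκ h1 hv
      rcases lt_trichotomy v u with hlt | rfl | hgt
      · have hub := (interp_mem (le_of_lt hv) hIv hmem).2
        rw [heq]
        exact le_trans hub (le_llim hg.1 hv0.le hlt)
      · exfalso; have := hmem.1; linarith
      · exfalso
        have h3 : ginv κ u ≤ llim (ginv κ) v := le_llim hmono hu0.le hgt
        have h4 := hmem.1
        linarith
    · rw [stilde_neg hex]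
      have hκs : κ s < u := by
        by_contra hc
        push_neg at hc
        rcases eq_or_lt_of_le hs0 with h0 | h0
        · rw [← h0, hκ.2.2.1] at hc; linarith
        · have hs₀ : llim (ginv κ) u ≤ s :=
            llim_le hu0 (fun w _ hwu =>
              csInf_le ⟨0, fun x hx => le_of_lt hx.1⟩ ⟨h0, lt_of_lt_of_le hwu hc⟩)
          linarith
      exact le_llim hg.1 (apply_nonneg hκ hs0) hκs
  · have hex : ∃ v : ℝ, JumpAt g v ∧
        ginv κ u ∈ Set.Icc (llim (ginv κ) v) (ginv κ v) :=
      ⟨u, hu, le_of_lt hI, le_refl _⟩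
    obtain ⟨v, ⟨hv, hmem⟩, heq⟩ := stilde_spec hex
    have hv0 : 0 < v := jump_pos hκ h1 hv
    have hIv : llim (ginv κ) v < ginv κ v := jump_interval hκ h1 hv
    rcases lt_trichotomy v u with hlt | rfl | hgt
    · exfalso
      have h3 : ginv κ v ≤ llim (ginv κ) u := le_llim hmono hv0.le hlt
      have h4 := hmem.2
      linarith
    · rw [heq, interp_right hI]
    · have hE : llim (ginv κ) v = ginv κ u :=
        le_antisymm hmem.1 (le_llim hmono hu0.le hgt)
      have hb := bridge hg hκ h2 hu0 hgt hE.symm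
      rw [heq, ← hE, interp_left]
      exact hb.symm
  · intro s hs
    by_cases hex : ∃ v : ℝ, JumpAt g v ∧ s ∈ Set.Icc (llim (ginv κ) v) (ginv κ v)
    · obtain ⟨v, ⟨hv, hmem⟩, heq⟩ := stilde_spec hex
      have hv0 : 0 < v := jump_pos hκ h1 hv
      have hIv : llim (ginv κ) v < ginv κ v := jump_interval hκ h1 hv
      rcases lt_trichotomy v u with hlt | rfl | hgt
      · exfalso
        have h3 : ginv κ v ≤ ginv κ u := ginv_mono hκ (le_of_lt hlt)
        have h4 := hmem.2
        linarith
      · exfalso; have := hmem.2; linarith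
      · have hlb := (interp_mem (le_of_lt hv) hIv hmem).1
        rw [heq]
        exact le_trans (le_llim hg.1 hu0.le hgt) hlb
    · rw [stilde_neg hex]
      have hlt : u < κ s := lt_apply_of_ginv_lt hκ hs
      exact hg.1 (Set.mem_Ici.mpr hu0.le)
        (Set.mem_Ici.mpr (le_of_lt (lt_trans hu0 hlt))) (le_of_lt hlt)
end

section
/- Let g₁,…,g_m be non-decreasing, right-continuous, unbounded functions on [0,∞) with gᵢ(0)=0 and gᵢ(t)>0 for t>0; let f := Σᵢ gᵢ⁻¹, κ := f⁻¹, γ = (g₁⁻¹ ∘̃ κ, …, g_m⁻¹ ∘̃ κ). Suppose t = (t₁,…,t_m) ∈ ℝ₊^m satisfies gᵢ(tᵢ) = g_{i+1}(t_{i+1}) for all i ∈ [m−1]. If for each i, gᵢ is continuous at tᵢ and strictly increasing from the left at tᵢ, then t = γ(t₁ + ⋯ + t_m). -/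
open Set Function Filter

/-!
Let `c` be the common value `gⱼ(tⱼ)`, `S = Σ tⱼ` and `F = Σ gⱼ⁻¹`, so `κ = F⁻¹`. Below level `c`
each `gⱼ⁻¹` stays strictly below `tⱼ` (continuity at `tⱼ`), from `c` on it is at least `tⱼ`, and
above `c` strictly larger (right continuity); hence `F < S` on `[0, c)`, `F ≥ S` on `[c, ∞)`,
`F > S` on `(c, ∞)`, and `κ(S) = c`. Strict increase from the left at `tⱼ` gives
`gⱼ⁻¹(s) → tⱼ` as `s ↑ c`, so `F(s) → S` and `κ⁻¹(c-) = S ≤ κ⁻¹(c)`. Therefore the only interval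
`[κ⁻¹(u-), κ⁻¹(u)]` that can contain `S` is the one over `u = c`: if `gᵢ⁻¹` jumps at `c` the
interpolation defining `γᵢ(S)` starts at `gᵢ⁻¹(c-) = tᵢ` at its left end `S`, and otherwise
`γᵢ(S) = gᵢ⁻¹(κ(S)) = gᵢ⁻¹(c) = tᵢ`.
-/

open scoped Topology

/-- Exactly the condition under which every set in the definition of `ginv h` is nonempty
(otherwise `ginv h s` is the junk value `sInf ∅ = 0`). -/
def UnboundedOnPos (h : ℝ → ℝ) : Prop := ∀ s, ∃ u, 0 < u ∧ s < h u

theorem Dpp.unboundedOnPos {h : ℝ → ℝ} (hh : Dpp h) : UnboundedOnPos h := by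
  obtain ⟨-, -, h0, hpos, hunb⟩ := hh
  intro s
  obtain ⟨u, hu, hsu⟩ := hunb (max s 0)
  rcases hu.lt_or_eq with hu | rfl
  · exact ⟨u, hu, (le_max_left s 0).trans_lt hsu⟩
  · rw [h0] at hsu
    exact absurd hsu (not_lt.2 (le_max_right s 0))

theorem pos_of_apply_pos {h : ℝ → ℝ} {t : ℝ} (h0 : h 0 = 0) (ht : 0 ≤ t) (hpos : 0 < h t) :
    0 < t :=
  ht.lt_of_ne fun ht0 => by rw [← ht0, h0] at hpos; exact hpos.false

theorem UnboundedOnPos.mono {h h' : ℝ → ℝ} (hh : UnboundedOnPos h)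
    (hle : ∀ u, 0 < u → h u ≤ h' u) : UnboundedOnPos h' := fun s =>
  (hh s).imp fun u ⟨hu, hsu⟩ => ⟨hu, hsu.trans_le (hle u hu)⟩

section llim

variable {h : ℝ → ℝ} {u w L : ℝ}

theorem llim_of_pos_s14 (hu : 0 < u) : llim h u = sSup (h '' Ico 0 u) :=
  if_neg (not_le.2 hu)

theorem apply_le_llim (hh : Monotone h) (hw : 0 ≤ w) (hwu : w < u) : h w ≤ llim h u := by
  rw [llim_of_pos_s14 (hw.trans_lt hwu)]
  exact le_csSup ⟨h u, by rintro _ ⟨x, hx, rfl⟩; exact hh hx.2.le⟩ ⟨w, ⟨hw, hwu⟩, rfl⟩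

theorem llim_eq_of_tendsto (hh : Monotone h) (hu : 0 < u) (hL : Tendsto h (𝓝[<] u) (𝓝 L)) :
    llim h u = L := by
  rw [llim_of_pos_s14 hu]
  refine IsLUB.csSup_eq ⟨?_, fun B hB => ?_⟩ ⟨h 0, 0, ⟨le_rfl, hu⟩, rfl⟩
  · rintro _ ⟨x, hx, rfl⟩
    exact ge_of_tendsto hL (mem_of_superset (Ioo_mem_nhdsLT hx.2) fun y hy => hh hy.1.le)
  · refine le_of_tendsto hL (mem_of_superset (Ioo_mem_nhdsLT hu) fun y hy => ?_)
    exact hB ⟨y, ⟨hy.1.le, hy.2⟩, rfl⟩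

theorem JumpAt.pos (hh : Monotone h) (hj : JumpAt h u) : 0 < u := by
  by_contra hu
  unfold JumpAt llim at hj
  rw [if_pos (not_lt.1 hu)] at hj
  exact hj.not_ge (hh (not_lt.1 hu))

end llim

section ginv

variable {h : ℝ → ℝ} {s t u w : ℝ}

theorem ginv_le (hu : 0 < u) (hsu : s < h u) : ginv h s ≤ u :=
  csInf_le ⟨0, fun _ hx => hx.1.le⟩ ⟨hu, hsu⟩

theorem le_ginv (hunb : UnboundedOnPos h) (H : ∀ u, 0 < u → s < h u → w ≤ u) :
    w ≤ ginv h s :=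
  le_csInf (hunb s) fun u hu => H u hu.1 hu.2

theorem ginv_nonneg_s14 (hunb : UnboundedOnPos h) : 0 ≤ ginv h s :=
  le_ginv hunb fun _ hu _ => hu.le

theorem ginv_zero (hunb : UnboundedOnPos h) (hpos : ∀ u, 0 < u → 0 < h u) : ginv h 0 = 0 :=
  le_antisymm (le_of_forall_gt_imp_ge_of_dense fun _ hu => ginv_le hu (hpos _ hu))
    (ginv_nonneg_s14 hunb)

theorem monotone_ginv (hunb : UnboundedOnPos h) : Monotone (ginv h) := fun _ b hab =>
  csInf_le_csInf ⟨0, fun _ hx => hx.1.le⟩ (hunb b) fun _ hu => ⟨hu.1, hab.trans_lt hu.2⟩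

theorem le_ginv_of_apply_le (hmono : MonotoneOn h (Ici 0)) (hunb : UnboundedOnPos h)
    (hw : 0 ≤ w) (hws : h w ≤ s) : w ≤ ginv h s :=
  le_ginv hunb fun _ hu hsu => not_lt.1 fun huw =>
    (hsu.trans_le ((hmono hu.le hw huw.le).trans hws)).false

theorem UnboundedOnPos.ginv (hunb : UnboundedOnPos h) (hmono : MonotoneOn h (Ici 0)) :
    UnboundedOnPos (ginv h) := fun s => by
  set w := max s 0 + 1
  have hw : 0 ≤ w := by positivity
  refine ⟨max (h w) 1, by positivity, ?_⟩
  exact ((le_max_left s 0).trans_lt (lt_add_one _)).trans_le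
    (le_ginv_of_apply_le hmono hunb hw (le_max_left _ _))

theorem ginv_lt_of_lt_llim (hmono : MonotoneOn h (Ici 0)) (h0s : h 0 ≤ s)
    (hs : s < llim h t) : ginv h s < t := by
  unfold llim at hs
  split_ifs at hs with ht
  · exact absurd h0s (not_le.2 hs)
  obtain ⟨_, ⟨v, ⟨hv, hvt⟩, rfl⟩, hsv⟩ :=
    exists_lt_of_lt_csSup ((nonempty_Ico.2 (not_le.1 ht)).image h) hs
  have hw : 0 < (v + t) / 2 := by linarith
  refine (ginv_le hw (hsv.trans_le (hmono hv hw.le ?_))).trans_lt ?_ <;> linarith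

theorem lt_ginv_of_apply_lt (hmono : MonotoneOn h (Ici 0)) (hunb : UnboundedOnPos h)
    (ht : 0 ≤ t) (hrc : ContinuousWithinAt h (Ici t) t) (hs : h t < s) : t < ginv h s := by
  obtain ⟨v, hvs, htv⟩ := (((hrc.mono Ioi_subset_Ici_self).eventually (gt_mem_nhds hs)).and
    self_mem_nhdsWithin).exists
  exact htv.trans_le (le_ginv_of_apply_le hmono hunb (ht.trans (le_of_lt htv)) hvs.le)

theorem apply_le_ginv_ginv (hunb : UnboundedOnPos (ginv h)) (hw : 0 < w) :
    h w ≤ ginv (ginv h) w :=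
  le_ginv hunb fun _ _ hwr => not_lt.1 fun hr => (ginv_le hw hr).not_gt hwr

theorem tendsto_ginv_nhdsLT (hmono : MonotoneOn h (Ici 0)) (hunb : UnboundedOnPos h)
    (ht : 0 < t) (hcont : llim h t = h t) (hleft : ∀ s, 0 ≤ s → s < t → h s < h t) :
    Tendsto (ginv h) (𝓝[<] (h t)) (𝓝 t) := by
  refine tendsto_order.2 ⟨fun a hat => ?_, fun a hta => ?_⟩
  · set b := max ((a + t) / 2) 0
    have hb : 0 ≤ b := le_max_right _ _
    have hbt : b < t := max_lt (by linarith) ht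
    have hab : a < b := by
      rcases lt_or_ge a 0 with ha | ha
      · exact ha.trans_le hb
      · exact (by linarith : a < (a + t) / 2).trans_le (le_max_left _ _)
    filter_upwards [Ioo_mem_nhdsLT (hleft b hb hbt)] with s hs
    exact hab.trans_le (le_ginv_of_apply_le hmono hunb hb hs.1.le)
  · filter_upwards [Ioo_mem_nhdsLT (hleft 0 le_rfl ht)] with s hs
    exact (ginv_lt_of_lt_llim hmono hs.1.le (hcont ▸ hs.2)).trans hta

theorem llim_ginv_apply (hmono : MonotoneOn h (Ici 0)) (hunb : UnboundedOnPos h) (ht : 0 < t)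
    (hpos : 0 < h t) (hcont : llim h t = h t) (hleft : ∀ s, 0 ≤ s → s < t → h s < h t) :
    llim (ginv h) (h t) = t :=
  llim_eq_of_tendsto (monotone_ginv hunb) hpos (tendsto_ginv_nhdsLT hmono hunb ht hcont hleft)

end ginv

section ginvGinv

variable {F : ℝ → ℝ} {c S u : ℝ}

theorem ginv_eq_of_le_of_lt (hunb : UnboundedOnPos F) (hc : 0 ≤ c)
    (hle : ∀ s, 0 ≤ s → s < c → F s ≤ S) (hgt : ∀ s, c < s → S < F s) : ginv F S = c :=
  le_antisymm (le_of_forall_gt_imp_ge_of_dense fun s hs => ginv_le (hc.trans_lt hs) (hgt s hs))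
    (le_ginv hunb fun v hv hSv => not_lt.1 fun hvc => (hle v hv.le hvc).not_gt hSv)

variable (hmono : MonotoneOn F (Ici 0)) (hunb : UnboundedOnPos F)
include hmono hunb

theorem ginv_ginv_lt (hF0 : 0 ≤ F 0) (hlt : ∀ s, 0 ≤ s → s < c → F s < S) (hu : 0 ≤ u)
    (huc : u < c) : ginv (ginv F) u < S := by
  obtain ⟨w, huw, hw, hwc⟩ : ∃ w, u < w ∧ 0 ≤ w ∧ w < c :=
    ⟨(u + c) / 2, by linarith, by linarith, by linarith⟩
  have hFw : 0 ≤ F w := hF0.trans (hmono self_mem_Ici hw hw)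
  have hwS : F w < S := hlt w hw hwc
  have hwr : w ≤ ginv F ((F w + S) / 2) := le_ginv_of_apply_le hmono hunb hw (by linarith)
  exact (ginv_le (by linarith) (huw.trans_le hwr)).trans_lt (by linarith)

theorem lt_llim_ginv_ginv (hgt : ∀ s, c < s → S < F s) (hc : 0 ≤ c) (hcu : c < u) :
    S < llim (ginv (ginv F)) u := by
  have hunb' := hunb.ginv hmono
  obtain ⟨w, hcw, hwu⟩ := exists_between hcu
  have hw : 0 < w := hc.trans_lt hcw
  calc S < F w := hgt w hcw
    _ ≤ ginv (ginv F) w := apply_le_ginv_ginv hunb' hw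
    _ ≤ llim (ginv (ginv F)) u := apply_le_llim (monotone_ginv hunb') hw.le hwu

theorem llim_ginv_ginv (hF0 : 0 ≤ F 0) (hlt : ∀ s, 0 ≤ s → s < c → F s < S) (hc : 0 < c)
    (htend : Tendsto F (𝓝[<] c) (𝓝 S)) : llim (ginv (ginv F)) c = S := by
  have hunb' := hunb.ginv hmono
  refine llim_eq_of_tendsto (monotone_ginv hunb') hc
    (tendsto_of_tendsto_of_tendsto_of_le_of_le' htend tendsto_const_nhds ?_ ?_)
  all_goals filter_upwards [Ioo_mem_nhdsLT hc] with w hw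
  · exact apply_le_ginv_ginv hunb' hw.1
  · exact (ginv_ginv_lt hmono hunb hF0 hlt hw.1.le hw.2).le

theorem eq_of_mem_Icc_llim_ginv_ginv (hF0 : 0 ≤ F 0) (hlt : ∀ s, 0 ≤ s → s < c → F s < S)
    (hgt : ∀ s, c < s → S < F s) (hc : 0 ≤ c) (hu : 0 < u)
    (hS : S ∈ Icc (llim (ginv (ginv F)) u) (ginv (ginv F) u)) : u = c := by
  rcases lt_trichotomy u c with huc | rfl | hcu
  · exact absurd hS.2 (not_le.2 (ginv_ginv_lt hmono hunb hF0 hlt hu.le huc))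
  · rfl
  · exact absurd hS.1 (not_le.2 (lt_llim_ginv_ginv hmono hunb hgt hc hcu))

theorem stilde_eq_of_llim_eq {G : ℝ → ℝ} {x : ℝ} (hF0 : 0 ≤ F 0)
    (hlt : ∀ s, 0 ≤ s → s < c → F s < S) (hge : ∀ s, c ≤ s → S ≤ F s)
    (hgt : ∀ s, c < s → S < F s) (hc : 0 ≤ c) (htend : 0 < c → Tendsto F (𝓝[<] c) (𝓝 S))
    (hG : Monotone G) (hGl : 0 < c → llim G c = x) (hG0 : G 0 ≤ x) (hxG : x ≤ G c) :
    stilde G (ginv F) S = x := by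
  have hllim : 0 < c → llim (ginv (ginv F)) c = S := fun hcpos =>
    llim_ginv_ginv hmono hunb hF0 hlt hcpos (htend hcpos)
  by_cases hjump : ∃ u, JumpAt G u ∧ S ∈ Icc (llim (ginv (ginv F)) u) (ginv (ginv F) u)
  · obtain ⟨hu_jump, hu_mem⟩ := Classical.choose_spec hjump
    have hu_pos := hu_jump.pos hG
    have hu : Classical.choose hjump = c :=
      eq_of_mem_Icc_llim_ginv_ginv hmono hunb hF0 hlt hgt hc hu_pos hu_mem
    rw [hu] at hu_pos
    simp only [stilde, dif_pos hjump, hu, hllim hu_pos, hGl hu_pos, sub_self, mul_zero,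
      zero_div, add_zero]
  · simp only [stilde, dif_neg hjump,
      ginv_eq_of_le_of_lt hunb hc (fun s hs hsc => (hlt s hs hsc).le) hgt]
    refine (hxG.lt_or_eq.resolve_left fun hx => hjump ⟨c, ?_⟩).symm
    have hcpos : 0 < c := hc.lt_of_ne fun h0 => by
      rw [← h0] at hx
      exact (hG0.trans_lt hx).false
    exact ⟨by rwa [JumpAt, hGl hcpos], (hllim hcpos).le,
      (hge c le_rfl).trans (apply_le_ginv_ginv (hunb.ginv hmono) hcpos)⟩

end ginvGinv

theorem Fin.apply_eq_apply_of_forall_succ {α : Type*} {m : ℕ} (a : Fin m → α)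
    (h : ∀ (i : ℕ) (hi : i + 1 < m), a ⟨i, Nat.lt_of_succ_lt hi⟩ = a ⟨i + 1, hi⟩)
    (j k : Fin m) : a j = a k := by
  have key : ∀ (n : ℕ) (hn : n < m), a ⟨n, hn⟩ = a ⟨0, Nat.zero_lt_of_lt hn⟩ := by
    intro n
    induction n with
    | zero => intro _; rfl
    | succ n ih => intro hn; exact (h n hn).symm.trans (ih _)
  exact (key j j.2).trans (key k k.2).symm

section sumGinv

variable {ι : Type*} [Fintype ι] {g : ι → ℝ → ℝ} {t : ι → ℝ} {c s : ℝ}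

theorem monotone_sum_ginv (hg : ∀ j, Dpp (g j)) : Monotone fun s => ∑ j, ginv (g j) s :=
  fun _ _ hab => Finset.sum_le_sum fun j _ => monotone_ginv (hg j).unboundedOnPos hab

theorem unboundedOnPos_sum_ginv [Nonempty ι] (hg : ∀ j, Dpp (g j)) :
    UnboundedOnPos fun s => ∑ j, ginv (g j) s := by
  obtain ⟨i⟩ := ‹Nonempty ι›
  refine ((hg i).unboundedOnPos.ginv (hg i).1).mono fun u _ => ?_
  exact Finset.single_le_sum (fun j _ => ginv_nonneg_s14 (hg j).unboundedOnPos) (Finset.mem_univ i)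

theorem sum_ginv_lt [Nonempty ι] (hg : ∀ j, Dpp (g j)) (hc : ∀ j, g j (t j) = c)
    (hcont : ∀ j, llim (g j) (t j) = g j (t j)) (hs : 0 ≤ s) (hsc : s < c) :
    ∑ j, ginv (g j) s < ∑ j, t j :=
  Finset.sum_lt_sum_of_nonempty Finset.univ_nonempty fun j _ =>
    ginv_lt_of_lt_llim (hg j).1 ((hg j).2.2.1.trans_le hs) (by rwa [hcont, hc])

theorem sum_le_sum_ginv (hg : ∀ j, Dpp (g j)) (ht : ∀ j, 0 ≤ t j) (hc : ∀ j, g j (t j) = c)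
    (hcs : c ≤ s) : ∑ j, t j ≤ ∑ j, ginv (g j) s :=
  Finset.sum_le_sum fun j _ =>
    le_ginv_of_apply_le (hg j).1 (hg j).unboundedOnPos (ht j) ((hc j).trans_le hcs)

theorem sum_lt_sum_ginv [Nonempty ι] (hg : ∀ j, Dpp (g j)) (ht : ∀ j, 0 ≤ t j)
    (hc : ∀ j, g j (t j) = c) (hcs : c < s) : ∑ j, t j < ∑ j, ginv (g j) s :=
  Finset.sum_lt_sum_of_nonempty Finset.univ_nonempty fun j _ =>
    lt_ginv_of_apply_lt (hg j).1 (hg j).unboundedOnPos (ht j) ((hg j).2.1 _ (ht j))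
      ((hc j).trans_lt hcs)

theorem tendsto_sum_ginv (hg : ∀ j, Dpp (g j)) (ht : ∀ j, 0 ≤ t j) (hc : ∀ j, g j (t j) = c)
    (hcont : ∀ j, llim (g j) (t j) = g j (t j))
    (hleft : ∀ j, ∀ s, 0 ≤ s → s < t j → g j s < g j (t j)) (hc0 : 0 < c) :
    Tendsto (fun s => ∑ j, ginv (g j) s) (𝓝[<] c) (𝓝 (∑ j, t j)) :=
  tendsto_finsetSum _ fun j _ => hc j ▸ tendsto_ginv_nhdsLT (hg j).1 (hg j).unboundedOnPos
    (pos_of_apply_pos (hg j).2.2.1 (ht j) ((hc j).symm ▸ hc0)) (hcont j) (hleft j)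

end sumGinv

/-- If `gᵢ(tᵢ) = g_{i+1}(t_{i+1})` and each `gᵢ` is continuous and strictly
increasing from the left at `tᵢ`, then `t = γ(‖t‖₁)`. -/
theorem stmt14 (m : ℕ) (g : Fin m → ℝ → ℝ) (hg : ∀ i, Dpp (g i))
    (f κ : ℝ → ℝ) (γ : Fin m → ℝ → ℝ)
    (hf : f = fun s => ∑ j, ginv (g j) s) (hκ : κ = ginv f)
    (hγ : ∀ i, γ i = stilde (ginv (g i)) κ)
    (t : Fin m → ℝ) (ht : ∀ i, 0 ≤ t i)
    (hchain : ∀ (i : ℕ) (hi : i + 1 < m),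
      g ⟨i, Nat.lt_of_succ_lt hi⟩ (t ⟨i, Nat.lt_of_succ_lt hi⟩) = g ⟨i + 1, hi⟩ (t ⟨i + 1, hi⟩))
    (hcont : ∀ i, llim (g i) (t i) = g i (t i))
    (hleft : ∀ i, ∀ s : ℝ, 0 ≤ s → s < t i → g i s < g i (t i)) :
    ∀ i, t i = γ i (∑ j, t j) := by
  subst hf hκ
  intro i
  have : Nonempty (Fin m) := ⟨i⟩
  have hc : ∀ j, g j (t j) = g i (t i) := fun j =>
    Fin.apply_eq_apply_of_forall_succ (fun j => g j (t j)) hchain j i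
  have hc0 : 0 ≤ g i (t i) := (hg i).2.2.1 ▸ (hg i).1 self_mem_Ici (ht i) (ht i)
  have hunb : ∀ j, UnboundedOnPos (g j) := fun j => (hg j).unboundedOnPos
  have hGl : 0 < g i (t i) → llim (ginv (g i)) (g i (t i)) = t i := fun hcpos =>
    llim_ginv_apply (hg i).1 (hunb i) (pos_of_apply_pos (hg i).2.2.1 (ht i) hcpos) hcpos
      (hcont i) (hleft i)
  have hG0 : ginv (g i) 0 ≤ t i := (ginv_zero (hunb i) (hg i).2.2.2.1).trans_le (ht i)
  rw [hγ i]
  exact (stilde_eq_of_llim_eq ((monotone_sum_ginv hg).monotoneOn _) (unboundedOnPos_sum_ginv hg)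
    (Finset.sum_nonneg fun j _ => ginv_nonneg_s14 (hunb j)) (fun _ => sum_ginv_lt hg hc hcont)
    (fun _ => sum_le_sum_ginv hg ht hc) (fun _ => sum_lt_sum_ginv hg ht hc) hc0
    (tendsto_sum_ginv hg ht hc hcont hleft) (monotone_ginv (hunb i)) hGl hG0
    (le_ginv_of_apply_le (hg i).1 (hunb i) (ht i) le_rfl)).symm
end
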